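/- arXiv:1506.05138 — 5 statements merged into one kernel-verified Lean document; each statement's English description precedes it below -/
import Mathlib

section
/- A vector v ∈ Λ satisfies v·v = −1 and v·K = −1 if and only if v is one of the following 27 vectors: the six vectors Eᵢ (1 ≤ i ≤ 6), the fifteen vectors Lᵢⱼ = L − Eᵢ − Eⱼ (1 ≤ i < j ≤ 6), and the six vectors Qᵢ = 2L + Eᵢ − (E₁ + ⋯ + E₆) (1 ≤ i ≤ 6). In particular there are exactly 27 (−1)-classes. -/
open Matrix

/-- The Picard lattice `Λ = ℤ⁷` of a smooth cubic surface, with basis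
`L = e₀, E₁ = e₁, …, E₆ = e₆`. -/
abbrev Lam : Type := Fin 7 → ℤ

/-- The Gram matrix of the intersection form: `L·L = 1`, `Eᵢ·Eᵢ = -1`, other products `0`. -/
def Jmat : Matrix (Fin 7) (Fin 7) ℤ := Matrix.diagonal ![1, -1, -1, -1, -1, -1, -1]

/-- The intersection form on `Λ`. -/
def form (v w : Lam) : ℤ := v ⬝ᵥ (Jmat *ᵥ w)

/-- The class `L`. -/
def Lv : Lam := ![1, 0, 0, 0, 0, 0, 0]

/-- The classes `E₁, …, E₆` (indexed by `Fin 6`, so `Ev i = E_{i+1}`). -/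
def Ev (i : Fin 6) : Lam := fun j => if j = i.succ then 1 else 0

/-- The canonical class `K = -3L + E₁ + ⋯ + E₆`. -/
def Kv : Lam := ![-3, 1, 1, 1, 1, 1, 1]

/-- `Lij i j = L - Eᵢ - Eⱼ` (with the `Fin 6` indexing, `Lij i j = L_{(i+1)(j+1)}`). -/
def Lij (i j : Fin 6) : Lam := Lv - Ev i - Ev j

/-- `Qv i = 2L + Eᵢ - (E₁ + ⋯ + E₆)` (with the `Fin 6` indexing, `Qv i = Q_{i+1}`). -/
def Qv (i : Fin 6) : Lam := 2 • Lv + Ev i - ∑ k, Ev k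

/-- A `(-1)`-class: a vector `v` with `v·v = -1` and `v·K = -1`. -/
def IsClass (v : Lam) : Prop := form v v = -1 ∧ form v Kv = -1

/-- The group of invertible `7 × 7` integer matrices, i.e. the group of `ℤ`-linear
automorphisms of `Λ` (acting via `A *ᵥ ·`). -/
abbrev GL7 := (Matrix (Fin 7) (Fin 7) ℤ)ˣ

/-- `W`: the subgroup of automorphisms of `Λ` preserving the intersection form and
fixing `K`; it is isomorphic to the Weyl group `W(E₆)`. -/
def W : Subgroup GL7 where
  carrier := {A | (A : Matrix (Fin 7) (Fin 7) ℤ)ᵀ * Jmat * A = Jmat ∧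
    (A : Matrix (Fin 7) (Fin 7) ℤ) *ᵥ Kv = Kv}
  one_mem' := by simp
  mul_mem' := by
    rintro A B ⟨hA1, hA2⟩ ⟨hB1, hB2⟩
    refine ⟨?_, ?_⟩ <;> simp only [Units.val_mul]
    · rw [Matrix.transpose_mul]
      calc (B : Matrix (Fin 7) (Fin 7) ℤ)ᵀ * (A : Matrix (Fin 7) (Fin 7) ℤ)ᵀ * Jmat *
            ((A : Matrix (Fin 7) (Fin 7) ℤ) * (B : Matrix (Fin 7) (Fin 7) ℤ))
          = (B : Matrix (Fin 7) (Fin 7) ℤ)ᵀ *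
            ((A : Matrix (Fin 7) (Fin 7) ℤ)ᵀ * Jmat * (A : Matrix (Fin 7) (Fin 7) ℤ)) *
            (B : Matrix (Fin 7) (Fin 7) ℤ) := by
            simp only [Matrix.mul_assoc]
        _ = Jmat := by rw [hA1, hB1]
    · rw [← Matrix.mulVec_mulVec, hB2, hA2]
  inv_mem' := by
    rintro A ⟨hA1, hA2⟩
    refine ⟨?_, ?_⟩
    · calc ((A⁻¹ : GL7) : Matrix (Fin 7) (Fin 7) ℤ)ᵀ * Jmat * ((A⁻¹ : GL7) : Matrix (Fin 7) (Fin 7) ℤ)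
          = ((A⁻¹ : GL7) : Matrix (Fin 7) (Fin 7) ℤ)ᵀ *
            ((A : Matrix (Fin 7) (Fin 7) ℤ)ᵀ * Jmat * (A : Matrix (Fin 7) (Fin 7) ℤ)) *
            ((A⁻¹ : GL7) : Matrix (Fin 7) (Fin 7) ℤ) := by rw [hA1]
        _ = ((A : Matrix (Fin 7) (Fin 7) ℤ) * ((A⁻¹ : GL7) : Matrix (Fin 7) (Fin 7) ℤ))ᵀ * Jmat *
            ((A : Matrix (Fin 7) (Fin 7) ℤ) * ((A⁻¹ : GL7) : Matrix (Fin 7) (Fin 7) ℤ)) := by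
            rw [Matrix.transpose_mul]; simp only [Matrix.mul_assoc]
        _ = Jmat := by rw [Units.mul_inv]; simp
    · conv_lhs => rw [← hA2]
      rw [Matrix.mulVec_mulVec, Units.inv_mul, Matrix.one_mulVec]

def aM : Matrix (Fin 7) (Fin 7) ℤ :=
  !![1, 0, 0, 0, 0, 0, 0;
     0, 0, 0, 1, 0, 0, 0;
     0, 1, 0, 0, 0, 0, 0;
     0, 0, 1, 0, 0, 0, 0;
     0, 0, 0, 0, 1, 0, 0;
     0, 0, 0, 0, 0, 1, 0;
     0, 0, 0, 0, 0, 0, 1]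

def bM : Matrix (Fin 7) (Fin 7) ℤ :=
  !![1, 0, 0, 0, 0, 0, 0;
     0, 1, 0, 0, 0, 0, 0;
     0, 0, 1, 0, 0, 0, 0;
     0, 0, 0, 1, 0, 0, 0;
     0, 0, 0, 0, 0, 0, 1;
     0, 0, 0, 0, 1, 0, 0;
     0, 0, 0, 0, 0, 1, 0]

def cM : Matrix (Fin 7) (Fin 7) ℤ :=
  !![1, 0, 0, 0, 0, 0, 0;
     0, 0, 0, 0, 1, 0, 0;
     0, 0, 0, 0, 0, 1, 0;
     0, 0, 0, 0, 0, 0, 1;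
     0, 1, 0, 0, 0, 0, 0;
     0, 0, 1, 0, 0, 0, 0;
     0, 0, 0, 1, 0, 0, 0]

def rM : Matrix (Fin 7) (Fin 7) ℤ :=
  !![4, 2, 2, 2, 1, 1, 1;
     -1, 0, -1, -1, 0, 0, 0;
     -1, -1, 0, -1, 0, 0, 0;
     -1, -1, -1, 0, 0, 0, 0;
     -2, -1, -1, -1, 0, -1, -1;
     -2, -1, -1, -1, -1, 0, -1;
     -2, -1, -1, -1, -1, -1, 0]

def rMi : Matrix (Fin 7) (Fin 7) ℤ :=
  !![4, 1, 1, 1, 2, 2, 2;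
     -2, 0, -1, -1, -1, -1, -1;
     -2, -1, 0, -1, -1, -1, -1;
     -2, -1, -1, 0, -1, -1, -1;
     -1, 0, 0, 0, 0, -1, -1;
     -1, 0, 0, 0, -1, 0, -1;
     -1, 0, 0, 0, -1, -1, 0]

def sM : Matrix (Fin 7) (Fin 7) ℤ :=
  !![5, 2, 2, 2, 2, 2, 2;
     -2, 0, -1, -1, -1, -1, -1;
     -2, -1, 0, -1, -1, -1, -1;
     -2, -1, -1, 0, -1, -1, -1;
     -2, -1, -1, -1, 0, -1, -1;
     -2, -1, -1, -1, -1, 0, -1;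
     -2, -1, -1, -1, -1, -1, 0]

/-- `a = w₍₁₂₃₎`, as an automorphism of `Λ` (sending `Eᵢ ↦ E_{σ(i)}`, fixing `L`). -/
def aU : GL7 := ⟨aM, aMᵀ, by decide, by decide⟩

/-- `b = w₍₄₅₆₎`. -/
def bU : GL7 := ⟨bM, bMᵀ, by decide, by decide⟩

/-- `c = w₍₁₄₎₍₂₅₎₍₃₆₎`. -/
def cU : GL7 := ⟨cM, cMᵀ, by decide, by decide⟩

/-- `r`: `r(L) = 4L - (E₁+E₂+E₃) - 2(E₄+E₅+E₆)`, `r(Eᵢ) = Qᵢ` for `i ∈ {1,2,3}`,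
`r(Eᵢ) = L_{jk}` for `i ∈ {4,5,6}`, `{j,k} = {4,5,6} \ {i}`. -/
def rU : GL7 := ⟨rM, rMi, by decide, by decide⟩

/-- `s`: `s(L) = 5L - 2(E₁ + ⋯ + E₆)`, `s(Eᵢ) = Qᵢ`. -/
def sU : GL7 := ⟨sM, sM, by decide, by decide⟩

/-- `g = ab = w₍₁₂₃₎₍₄₅₆₎`. -/
def gU : GL7 := aU * bU

/-- The sublattice of vectors fixed by an automorphism `A`. -/
def fixedBy (A : GL7) : Submodule ℤ Lam :=
  LinearMap.ker ((A : Matrix (Fin 7) (Fin 7) ℤ).mulVecLin - LinearMap.id)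

/-- The sublattice of vectors fixed by every element of a subgroup `S`. -/
def fixedOf (S : Subgroup GL7) : Submodule ℤ Lam := ⨅ A : S, fixedBy (A : GL7)


private lemma lam_ext' (v : Lam) (a0 a1 a2 a3 a4 a5 a6 : ℤ) (h0 : v 0 = a0) (h1 : v 1 = a1)
    (h2 : v 2 = a2) (h3 : v 3 = a3) (h4 : v 4 = a4) (h5 : v 5 = a5) (h6 : v 6 = a6) :
    v = ![a0, a1, a2, a3, a4, a5, a6] := by
  funext k
  fin_cases k <;> simpa using ‹_›

private lemma sq_sub_nonneg' (x : ℤ) : 0 ≤ x * x - x := by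
  rcases le_or_gt x 0 with h | h <;> nlinarith

private lemma sq_add_nonneg' (x : ℤ) : 0 ≤ x * x + x := by
  rcases le_or_gt x (-1) with h | h <;> nlinarith

private lemma a_bound' (a b1 b2 b3 b4 b5 b6 : ℤ) (hs : b1 + b2 + b3 + b4 + b5 + b6 = 1 - 3 * a)
    (hq : b1 * b1 + b2 * b2 + b3 * b3 + b4 * b4 + b5 * b5 + b6 * b6 = a * a + 1) : a = 0 ∨ a = 1 ∨ a = 2 := by
  have hs2 : (b1 + b2 + b3 + b4 + b5 + b6) * (b1 + b2 + b3 + b4 + b5 + b6) = (1 - 3 * a) * (1 - 3 * a) := by rw [hs]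
  have key : 3 * a * a - 6 * a - 5 ≤ 0 := by
    nlinarith [sq_nonneg (b1 - b2), sq_nonneg (b1 - b3), sq_nonneg (b1 - b4), sq_nonneg (b1 - b5), sq_nonneg (b1 - b6), sq_nonneg (b2 - b3), sq_nonneg (b2 - b4), sq_nonneg (b2 - b5), sq_nonneg (b2 - b6), sq_nonneg (b3 - b4), sq_nonneg (b3 - b5), sq_nonneg (b3 - b6), sq_nonneg (b4 - b5), sq_nonneg (b4 - b6), sq_nonneg (b5 - b6)]
  have hb1 : 0 ≤ a := by nlinarith
  have hb2 : a ≤ 2 := by nlinarith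
  omega
set_option synthInstance.maxHeartbeats 400000 in
set_option synthInstance.maxSize 4000 in
set_option maxHeartbeats 400000 in
private lemma case0' (b1 b2 b3 b4 b5 b6 : ℤ) (hs : b1 + b2 + b3 + b4 + b5 + b6 = 1)
    (hq : b1 * b1 + b2 * b2 + b3 * b3 + b4 * b4 + b5 * b5 + b6 * b6 = 1) :
    (b1 = 1 ∧ b2 = 0 ∧ b3 = 0 ∧ b4 = 0 ∧ b5 = 0 ∧ b6 = 0) ∨ (b1 = 0 ∧ b2 = 1 ∧ b3 = 0 ∧ b4 = 0 ∧ b5 = 0 ∧ b6 = 0) ∨ (b1 = 0 ∧ b2 = 0 ∧ b3 = 1 ∧ b4 = 0 ∧ b5 = 0 ∧ b6 = 0) ∨ (b1 = 0 ∧ b2 = 0 ∧ b3 = 0 ∧ b4 = 1 ∧ b5 = 0 ∧ b6 = 0) ∨ (b1 = 0 ∧ b2 = 0 ∧ b3 = 0 ∧ b4 = 0 ∧ b5 = 1 ∧ b6 = 0) ∨ (b1 = 0 ∧ b2 = 0 ∧ b3 = 0 ∧ b4 = 0 ∧ b5 = 0 ∧ b6 = 1) := by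
  have e1 : b1 * b1 = b1 := by
    linarith [sq_sub_nonneg' b1, sq_sub_nonneg' b2, sq_sub_nonneg' b3, sq_sub_nonneg' b4, sq_sub_nonneg' b5, sq_sub_nonneg' b6]
  have m1 : b1 = 0 ∨ b1 = 1 := by
    rcases mul_eq_zero.mp (show b1 * (b1 - 1) = 0 by linear_combination e1) with h | h
    exacts [Or.inl h, Or.inr (by omega)]
  have e2 : b2 * b2 = b2 := by
    linarith [sq_sub_nonneg' b1, sq_sub_nonneg' b2, sq_sub_nonneg' b3, sq_sub_nonneg' b4, sq_sub_nonneg' b5, sq_sub_nonneg' b6]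
  have m2 : b2 = 0 ∨ b2 = 1 := by
    rcases mul_eq_zero.mp (show b2 * (b2 - 1) = 0 by linear_combination e2) with h | h
    exacts [Or.inl h, Or.inr (by omega)]
  have e3 : b3 * b3 = b3 := by
    linarith [sq_sub_nonneg' b1, sq_sub_nonneg' b2, sq_sub_nonneg' b3, sq_sub_nonneg' b4, sq_sub_nonneg' b5, sq_sub_nonneg' b6]
  have m3 : b3 = 0 ∨ b3 = 1 := by
    rcases mul_eq_zero.mp (show b3 * (b3 - 1) = 0 by linear_combination e3) with h | h
    exacts [Or.inl h, Or.inr (by omega)]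
  have e4 : b4 * b4 = b4 := by
    linarith [sq_sub_nonneg' b1, sq_sub_nonneg' b2, sq_sub_nonneg' b3, sq_sub_nonneg' b4, sq_sub_nonneg' b5, sq_sub_nonneg' b6]
  have m4 : b4 = 0 ∨ b4 = 1 := by
    rcases mul_eq_zero.mp (show b4 * (b4 - 1) = 0 by linear_combination e4) with h | h
    exacts [Or.inl h, Or.inr (by omega)]
  have e5 : b5 * b5 = b5 := by
    linarith [sq_sub_nonneg' b1, sq_sub_nonneg' b2, sq_sub_nonneg' b3, sq_sub_nonneg' b4, sq_sub_nonneg' b5, sq_sub_nonneg' b6]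
  have m5 : b5 = 0 ∨ b5 = 1 := by
    rcases mul_eq_zero.mp (show b5 * (b5 - 1) = 0 by linear_combination e5) with h | h
    exacts [Or.inl h, Or.inr (by omega)]
  have e6 : b6 * b6 = b6 := by
    linarith [sq_sub_nonneg' b1, sq_sub_nonneg' b2, sq_sub_nonneg' b3, sq_sub_nonneg' b4, sq_sub_nonneg' b5, sq_sub_nonneg' b6]
  have m6 : b6 = 0 ∨ b6 = 1 := by
    rcases mul_eq_zero.mp (show b6 * (b6 - 1) = 0 by linear_combination e6) with h | h
    exacts [Or.inl h, Or.inr (by omega)]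
  clear e1 e2 e3 e4 e5 e6 hq
  rcases m1 with h1 | h1 <;> rcases m2 with h2 | h2 <;> rcases m3 with h3 | h3 <;>
    rcases m4 with h4 | h4 <;> rcases m5 with h5 | h5 <;> rcases m6 with h6 | h6 <;>
    subst h1 h2 h3 h4 h5 h6 <;> first | (exact absurd hs (by decide)) | decide

set_option synthInstance.maxHeartbeats 400000 in
set_option synthInstance.maxSize 4000 in
set_option maxHeartbeats 400000 in
private lemma case1' (b1 b2 b3 b4 b5 b6 : ℤ) (hs : b1 + b2 + b3 + b4 + b5 + b6 = -2)
    (hq : b1 * b1 + b2 * b2 + b3 * b3 + b4 * b4 + b5 * b5 + b6 * b6 = 2) :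
    (b1 = -1 ∧ b2 = -1 ∧ b3 = 0 ∧ b4 = 0 ∧ b5 = 0 ∧ b6 = 0) ∨ (b1 = -1 ∧ b2 = 0 ∧ b3 = -1 ∧ b4 = 0 ∧ b5 = 0 ∧ b6 = 0) ∨ (b1 = -1 ∧ b2 = 0 ∧ b3 = 0 ∧ b4 = -1 ∧ b5 = 0 ∧ b6 = 0) ∨ (b1 = -1 ∧ b2 = 0 ∧ b3 = 0 ∧ b4 = 0 ∧ b5 = -1 ∧ b6 = 0) ∨ (b1 = -1 ∧ b2 = 0 ∧ b3 = 0 ∧ b4 = 0 ∧ b5 = 0 ∧ b6 = -1) ∨ (b1 = 0 ∧ b2 = -1 ∧ b3 = -1 ∧ b4 = 0 ∧ b5 = 0 ∧ b6 = 0) ∨ (b1 = 0 ∧ b2 = -1 ∧ b3 = 0 ∧ b4 = -1 ∧ b5 = 0 ∧ b6 = 0) ∨ (b1 = 0 ∧ b2 = -1 ∧ b3 = 0 ∧ b4 = 0 ∧ b5 = -1 ∧ b6 = 0) ∨ (b1 = 0 ∧ b2 = -1 ∧ b3 = 0 ∧ b4 = 0 ∧ b5 = 0 ∧ b6 = -1)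 ∨ (b1 = 0 ∧ b2 = 0 ∧ b3 = -1 ∧ b4 = -1 ∧ b5 = 0 ∧ b6 = 0) ∨ (b1 = 0 ∧ b2 = 0 ∧ b3 = -1 ∧ b4 = 0 ∧ b5 = -1 ∧ b6 = 0) ∨ (b1 = 0 ∧ b2 = 0 ∧ b3 = -1 ∧ b4 = 0 ∧ b5 = 0 ∧ b6 = -1) ∨ (b1 = 0 ∧ b2 = 0 ∧ b3 = 0 ∧ b4 = -1 ∧ b5 = -1 ∧ b6 = 0) ∨ (b1 = 0 ∧ b2 = 0 ∧ b3 = 0 ∧ b4 = -1 ∧ b5 = 0 ∧ b6 = -1) ∨ (b1 = 0 ∧ b2 = 0 ∧ b3 = 0 ∧ b4 = 0 ∧ b5 = -1 ∧ b6 = -1) := by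
  have e1 : b1 * b1 = -b1 := by
    linarith [sq_add_nonneg' b1, sq_add_nonneg' b2, sq_add_nonneg' b3, sq_add_nonneg' b4, sq_add_nonneg' b5, sq_add_nonneg' b6]
  have m1 : b1 = 0 ∨ b1 = -1 := by
    rcases mul_eq_zero.mp (show b1 * (b1 + 1) = 0 by linear_combination e1) with h | h
    exacts [Or.inl h, Or.inr (by omega)]
  have e2 : b2 * b2 = -b2 := by
    linarith [sq_add_nonneg' b1, sq_add_nonneg' b2, sq_add_nonneg' b3, sq_add_nonneg' b4, sq_add_nonneg' b5, sq_add_nonneg' b6]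
  have m2 : b2 = 0 ∨ b2 = -1 := by
    rcases mul_eq_zero.mp (show b2 * (b2 + 1) = 0 by linear_combination e2) with h | h
    exacts [Or.inl h, Or.inr (by omega)]
  have e3 : b3 * b3 = -b3 := by
    linarith [sq_add_nonneg' b1, sq_add_nonneg' b2, sq_add_nonneg' b3, sq_add_nonneg' b4, sq_add_nonneg' b5, sq_add_nonneg' b6]
  have m3 : b3 = 0 ∨ b3 = -1 := by
    rcases mul_eq_zero.mp (show b3 * (b3 + 1) = 0 by linear_combination e3) with h | h
    exacts [Or.inl h, Or.inr (by omega)]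
  have e4 : b4 * b4 = -b4 := by
    linarith [sq_add_nonneg' b1, sq_add_nonneg' b2, sq_add_nonneg' b3, sq_add_nonneg' b4, sq_add_nonneg' b5, sq_add_nonneg' b6]
  have m4 : b4 = 0 ∨ b4 = -1 := by
    rcases mul_eq_zero.mp (show b4 * (b4 + 1) = 0 by linear_combination e4) with h | h
    exacts [Or.inl h, Or.inr (by omega)]
  have e5 : b5 * b5 = -b5 := by
    linarith [sq_add_nonneg' b1, sq_add_nonneg' b2, sq_add_nonneg' b3, sq_add_nonneg' b4, sq_add_nonneg' b5, sq_add_nonneg' b6]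
  have m5 : b5 = 0 ∨ b5 = -1 := by
    rcases mul_eq_zero.mp (show b5 * (b5 + 1) = 0 by linear_combination e5) with h | h
    exacts [Or.inl h, Or.inr (by omega)]
  have e6 : b6 * b6 = -b6 := by
    linarith [sq_add_nonneg' b1, sq_add_nonneg' b2, sq_add_nonneg' b3, sq_add_nonneg' b4, sq_add_nonneg' b5, sq_add_nonneg' b6]
  have m6 : b6 = 0 ∨ b6 = -1 := by
    rcases mul_eq_zero.mp (show b6 * (b6 + 1) = 0 by linear_combination e6) with h | h
    exacts [Or.inl h, Or.inr (by omega)]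
  clear e1 e2 e3 e4 e5 e6 hq
  rcases m1 with h1 | h1 <;> rcases m2 with h2 | h2 <;> rcases m3 with h3 | h3 <;>
    rcases m4 with h4 | h4 <;> rcases m5 with h5 | h5 <;> rcases m6 with h6 | h6 <;>
    subst h1 h2 h3 h4 h5 h6 <;> first | (exact absurd hs (by decide)) | decide

set_option synthInstance.maxHeartbeats 400000 in
set_option synthInstance.maxSize 4000 in
set_option maxHeartbeats 400000 in
private lemma case2' (b1 b2 b3 b4 b5 b6 : ℤ) (hs : b1 + b2 + b3 + b4 + b5 + b6 = -5)
    (hq : b1 * b1 + b2 * b2 + b3 * b3 + b4 * b4 + b5 * b5 + b6 * b6 = 5) :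
    (b1 = 0 ∧ b2 = -1 ∧ b3 = -1 ∧ b4 = -1 ∧ b5 = -1 ∧ b6 = -1) ∨ (b1 = -1 ∧ b2 = 0 ∧ b3 = -1 ∧ b4 = -1 ∧ b5 = -1 ∧ b6 = -1) ∨ (b1 = -1 ∧ b2 = -1 ∧ b3 = 0 ∧ b4 = -1 ∧ b5 = -1 ∧ b6 = -1) ∨ (b1 = -1 ∧ b2 = -1 ∧ b3 = -1 ∧ b4 = 0 ∧ b5 = -1 ∧ b6 = -1) ∨ (b1 = -1 ∧ b2 = -1 ∧ b3 = -1 ∧ b4 = -1 ∧ b5 = 0 ∧ b6 = -1) ∨ (b1 = -1 ∧ b2 = -1 ∧ b3 = -1 ∧ b4 = -1 ∧ b5 = -1 ∧ b6 = 0) := by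
  have e1 : b1 * b1 = -b1 := by
    linarith [sq_add_nonneg' b1, sq_add_nonneg' b2, sq_add_nonneg' b3, sq_add_nonneg' b4, sq_add_nonneg' b5, sq_add_nonneg' b6]
  have m1 : b1 = 0 ∨ b1 = -1 := by
    rcases mul_eq_zero.mp (show b1 * (b1 + 1) = 0 by linear_combination e1) with h | h
    exacts [Or.inl h, Or.inr (by omega)]
  have e2 : b2 * b2 = -b2 := by
    linarith [sq_add_nonneg' b1, sq_add_nonneg' b2, sq_add_nonneg' b3, sq_add_nonneg' b4, sq_add_nonneg' b5, sq_add_nonneg' b6]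
  have m2 : b2 = 0 ∨ b2 = -1 := by
    rcases mul_eq_zero.mp (show b2 * (b2 + 1) = 0 by linear_combination e2) with h | h
    exacts [Or.inl h, Or.inr (by omega)]
  have e3 : b3 * b3 = -b3 := by
    linarith [sq_add_nonneg' b1, sq_add_nonneg' b2, sq_add_nonneg' b3, sq_add_nonneg' b4, sq_add_nonneg' b5, sq_add_nonneg' b6]
  have m3 : b3 = 0 ∨ b3 = -1 := by
    rcases mul_eq_zero.mp (show b3 * (b3 + 1) = 0 by linear_combination e3) with h | h
    exacts [Or.inl h, Or.inr (by omega)]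
  have e4 : b4 * b4 = -b4 := by
    linarith [sq_add_nonneg' b1, sq_add_nonneg' b2, sq_add_nonneg' b3, sq_add_nonneg' b4, sq_add_nonneg' b5, sq_add_nonneg' b6]
  have m4 : b4 = 0 ∨ b4 = -1 := by
    rcases mul_eq_zero.mp (show b4 * (b4 + 1) = 0 by linear_combination e4) with h | h
    exacts [Or.inl h, Or.inr (by omega)]
  have e5 : b5 * b5 = -b5 := by
    linarith [sq_add_nonneg' b1, sq_add_nonneg' b2, sq_add_nonneg' b3, sq_add_nonneg' b4, sq_add_nonneg' b5, sq_add_nonneg' b6]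
  have m5 : b5 = 0 ∨ b5 = -1 := by
    rcases mul_eq_zero.mp (show b5 * (b5 + 1) = 0 by linear_combination e5) with h | h
    exacts [Or.inl h, Or.inr (by omega)]
  have e6 : b6 * b6 = -b6 := by
    linarith [sq_add_nonneg' b1, sq_add_nonneg' b2, sq_add_nonneg' b3, sq_add_nonneg' b4, sq_add_nonneg' b5, sq_add_nonneg' b6]
  have m6 : b6 = 0 ∨ b6 = -1 := by
    rcases mul_eq_zero.mp (show b6 * (b6 + 1) = 0 by linear_combination e6) with h | h
    exacts [Or.inl h, Or.inr (by omega)]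
  clear e1 e2 e3 e4 e5 e6 hq
  rcases m1 with h1 | h1 <;> rcases m2 with h2 | h2 <;> rcases m3 with h3 | h3 <;>
    rcases m4 with h4 | h4 <;> rcases m5 with h5 | h5 <;> rcases m6 with h6 | h6 <;>
    subst h1 h2 h3 h4 h5 h6 <;> first | (exact absurd hs (by decide)) | decide

private lemma isClass_Ev : ∀ i : Fin 6, IsClass (Ev i) := by unfold IsClass; decide
private lemma isClass_Lij : ∀ i j : Fin 6, i < j → IsClass (Lij i j) := by unfold IsClass; decide
private lemma isClass_Qv : ∀ i : Fin 6, IsClass (Qv i) := by unfold IsClass; decide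

set_option maxHeartbeats 1000000 in
private lemma class_iff (v : Lam) : IsClass v ↔
    ((∃ i : Fin 6, v = Ev i) ∨ (∃ i j : Fin 6, i < j ∧ v = Lij i j) ∨
      (∃ i : Fin 6, v = Qv i)) := by
  constructor
  · rintro ⟨h1, h2⟩
    have hq : v 0 * v 0 - v 1 * v 1 - v 2 * v 2 - v 3 * v 3 - v 4 * v 4 - v 5 * v 5 - v 6 * v 6
        = -1 := by
      simp [form, Jmat, Matrix.mulVec, dotProduct, Fin.sum_univ_seven, Matrix.diagonal,
        show (![(1:ℤ),-1,-1,-1,-1,-1,-1] 5) = -1 from rfl,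
        show (![(1:ℤ),-1,-1,-1,-1,-1,-1] 6) = -1 from rfl] at h1
      linarith
    have hl : -3 * v 0 - v 1 - v 2 - v 3 - v 4 - v 5 - v 6 = -1 := by
      simp [form, Jmat, Kv, Matrix.mulVec, dotProduct, Fin.sum_univ_seven, Matrix.diagonal,
        show (![(1:ℤ),-1,-1,-1,-1,-1,-1] 5) = -1 from rfl,
        show (![(1:ℤ),-1,-1,-1,-1,-1,-1] 6) = -1 from rfl,
        show (![(-3:ℤ),1,1,1,1,1,1] 5) = 1 from rfl,
        show (![(-3:ℤ),1,1,1,1,1,1] 6) = 1 from rfl] at h2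
      linarith
    have ha := a_bound' (v 0) (v 1) (v 2) (v 3) (v 4) (v 5) (v 6) (by linarith) (by linarith)
    rcases ha with h0 | h0 | h0
    · rcases case0' (v 1) (v 2) (v 3) (v 4) (v 5) (v 6) (by linarith) (by nlinarith) with
        h | h | h | h | h | h <;> obtain ⟨e1, e2, e3, e4, e5, e6⟩ := h
      · exact Or.inl ⟨0, (lam_ext' v 0 1 0 0 0 0 0 h0 e1 e2 e3 e4 e5 e6).trans (by decide)⟩
      · exact Or.inl ⟨1, (lam_ext' v 0 0 1 0 0 0 0 h0 e1 e2 e3 e4 e5 e6).trans (by decide)⟩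
      · exact Or.inl ⟨2, (lam_ext' v 0 0 0 1 0 0 0 h0 e1 e2 e3 e4 e5 e6).trans (by decide)⟩
      · exact Or.inl ⟨3, (lam_ext' v 0 0 0 0 1 0 0 h0 e1 e2 e3 e4 e5 e6).trans (by decide)⟩
      · exact Or.inl ⟨4, (lam_ext' v 0 0 0 0 0 1 0 h0 e1 e2 e3 e4 e5 e6).trans (by decide)⟩
      · exact Or.inl ⟨5, (lam_ext' v 0 0 0 0 0 0 1 h0 e1 e2 e3 e4 e5 e6).trans (by decide)⟩
    · rcases case1' (v 1) (v 2) (v 3) (v 4) (v 5) (v 6) (by linarith) (by nlinarith) with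
        h | h | h | h | h | h | h | h | h | h | h | h | h | h | h <;> obtain ⟨e1, e2, e3, e4, e5, e6⟩ := h
      · exact Or.inr (Or.inl ⟨0, 1, by decide, (lam_ext' v 1 (-1) (-1) 0 0 0 0 h0 e1 e2 e3 e4 e5 e6).trans (by decide)⟩)
      · exact Or.inr (Or.inl ⟨0, 2, by decide, (lam_ext' v 1 (-1) 0 (-1) 0 0 0 h0 e1 e2 e3 e4 e5 e6).trans (by decide)⟩)
      · exact Or.inr (Or.inl ⟨0, 3, by decide, (lam_ext' v 1 (-1) 0 0 (-1) 0 0 h0 e1 e2 e3 e4 e5 e6).trans (by decide)⟩)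
      · exact Or.inr (Or.inl ⟨0, 4, by decide, (lam_ext' v 1 (-1) 0 0 0 (-1) 0 h0 e1 e2 e3 e4 e5 e6).trans (by decide)⟩)
      · exact Or.inr (Or.inl ⟨0, 5, by decide, (lam_ext' v 1 (-1) 0 0 0 0 (-1) h0 e1 e2 e3 e4 e5 e6).trans (by decide)⟩)
      · exact Or.inr (Or.inl ⟨1, 2, by decide, (lam_ext' v 1 0 (-1) (-1) 0 0 0 h0 e1 e2 e3 e4 e5 e6).trans (by decide)⟩)
      · exact Or.inr (Or.inl ⟨1, 3, by decide, (lam_ext' v 1 0 (-1) 0 (-1) 0 0 h0 e1 e2 e3 e4 e5 e6).trans (by decide)⟩)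
      · exact Or.inr (Or.inl ⟨1, 4, by decide, (lam_ext' v 1 0 (-1) 0 0 (-1) 0 h0 e1 e2 e3 e4 e5 e6).trans (by decide)⟩)
      · exact Or.inr (Or.inl ⟨1, 5, by decide, (lam_ext' v 1 0 (-1) 0 0 0 (-1) h0 e1 e2 e3 e4 e5 e6).trans (by decide)⟩)
      · exact Or.inr (Or.inl ⟨2, 3, by decide, (lam_ext' v 1 0 0 (-1) (-1) 0 0 h0 e1 e2 e3 e4 e5 e6).trans (by decide)⟩)
      · exact Or.inr (Or.inl ⟨2, 4, by decide, (lam_ext' v 1 0 0 (-1) 0 (-1) 0 h0 e1 e2 e3 e4 e5 e6).trans (by decide)⟩)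
      · exact Or.inr (Or.inl ⟨2, 5, by decide, (lam_ext' v 1 0 0 (-1) 0 0 (-1) h0 e1 e2 e3 e4 e5 e6).trans (by decide)⟩)
      · exact Or.inr (Or.inl ⟨3, 4, by decide, (lam_ext' v 1 0 0 0 (-1) (-1) 0 h0 e1 e2 e3 e4 e5 e6).trans (by decide)⟩)
      · exact Or.inr (Or.inl ⟨3, 5, by decide, (lam_ext' v 1 0 0 0 (-1) 0 (-1) h0 e1 e2 e3 e4 e5 e6).trans (by decide)⟩)
      · exact Or.inr (Or.inl ⟨4, 5, by decide, (lam_ext' v 1 0 0 0 0 (-1) (-1) h0 e1 e2 e3 e4 e5 e6).trans (by decide)⟩)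
    · rcases case2' (v 1) (v 2) (v 3) (v 4) (v 5) (v 6) (by linarith) (by nlinarith) with
        h | h | h | h | h | h <;> obtain ⟨e1, e2, e3, e4, e5, e6⟩ := h
      · exact Or.inr (Or.inr ⟨0, (lam_ext' v 2 0 (-1) (-1) (-1) (-1) (-1) h0 e1 e2 e3 e4 e5 e6).trans (by decide)⟩)
      · exact Or.inr (Or.inr ⟨1, (lam_ext' v 2 (-1) 0 (-1) (-1) (-1) (-1) h0 e1 e2 e3 e4 e5 e6).trans (by decide)⟩)
      · exact Or.inr (Or.inr ⟨2, (lam_ext' v 2 (-1) (-1) 0 (-1) (-1) (-1) h0 e1 e2 e3 e4 e5 e6).trans (by decide)⟩)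
      · exact Or.inr (Or.inr ⟨3, (lam_ext' v 2 (-1) (-1) (-1) 0 (-1) (-1) h0 e1 e2 e3 e4 e5 e6).trans (by decide)⟩)
      · exact Or.inr (Or.inr ⟨4, (lam_ext' v 2 (-1) (-1) (-1) (-1) 0 (-1) h0 e1 e2 e3 e4 e5 e6).trans (by decide)⟩)
      · exact Or.inr (Or.inr ⟨5, (lam_ext' v 2 (-1) (-1) (-1) (-1) (-1) 0 h0 e1 e2 e3 e4 e5 e6).trans (by decide)⟩)
  · rintro (⟨i, rfl⟩ | ⟨i, j, hij, rfl⟩ | ⟨i, rfl⟩)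
    exacts [isClass_Ev i, isClass_Lij i j hij, isClass_Qv i]

private def classFinset : Finset Lam :=
  (Finset.univ.image Ev) ∪
  ((Finset.univ.filter (fun p : Fin 6 × Fin 6 => p.1 < p.2)).image fun p => Lij p.1 p.2) ∪
  (Finset.univ.image Qv)

private lemma mem_classFinset (v : Lam) : v ∈ classFinset ↔
    ((∃ i : Fin 6, v = Ev i) ∨ (∃ i j : Fin 6, i < j ∧ v = Lij i j) ∨
        (∃ i : Fin 6, v = Qv i)) := by
  simp only [classFinset, Finset.mem_union, Finset.mem_image, Finset.mem_filter,
    Finset.mem_univ, true_and]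
  constructor
  · rintro ((⟨i, rfl⟩ | ⟨⟨i, j⟩, hij, rfl⟩) | ⟨i, rfl⟩)
    · exact Or.inl ⟨i, rfl⟩
    · exact Or.inr (Or.inl ⟨i, j, hij, rfl⟩)
    · exact Or.inr (Or.inr ⟨i, rfl⟩)
  · rintro (⟨i, rfl⟩ | ⟨i, j, hij, rfl⟩ | ⟨i, rfl⟩)
    · exact Or.inl (Or.inl ⟨i, rfl⟩)
    · exact Or.inl (Or.inr ⟨⟨i, j⟩, hij, rfl⟩)
    · exact Or.inr ⟨i, rfl⟩


/-- **Remark 2.7 / classification of the 27 lines.** `v ∈ Λ` satisfies `v·v = -1` and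
`v·K = -1` iff `v` is one of the six `Eᵢ`, the fifteen `Lᵢⱼ = L - Eᵢ - Eⱼ` (`i < j`),
or the six `Qᵢ = 2L + Eᵢ - (E₁ + ⋯ + E₆)`; in particular there are exactly 27 such classes. -/
theorem minus_one_classes_classification :
    (∀ v : Lam, IsClass v ↔
      ((∃ i : Fin 6, v = Ev i) ∨ (∃ i j : Fin 6, i < j ∧ v = Lij i j) ∨
        (∃ i : Fin 6, v = Qv i))) ∧
    {v : Lam | IsClass v}.ncard = 27 := by
  refine ⟨class_iff, ?_⟩
  have hset : {v : Lam | IsClass v} = ↑classFinset := by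
    ext v
    simp only [Set.mem_setOf_eq, Finset.mem_coe]
    exact (class_iff v).trans (mem_classFinset v).symm
  rw [hset, Set.ncard_coe_finset]
  decide
end

section
/- The element g permutes the 27 (−1)-classes of Λ with exactly nine orbits, each of size 3. Exactly three of these orbits, namely {L₁₄, L₂₅, L₃₆}, {L₁₅, L₂₆, L₃₄} and {L₁₆, L₂₄, L₃₅}, consist of classes whose pairwise products equal 1; each of the remaining six orbits consists of pairwise orthogonal classes. In particular g fixes no (−1)-class. -/
open Matrix

lemma form_eval (v w : Lam) : form v w = v 0 * w 0 - v 1 * w 1 - v 2 * w 2 - v 3 * w 3 - v 4 * w 4 - v 5 * w 5 - v 6 * w 6 := by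
  have e5 : (![(1:ℤ),-1,-1,-1,-1,-1,-1] : Fin 7 → ℤ) 5 = -1 := rfl
  have e6 : (![(1:ℤ),-1,-1,-1,-1,-1,-1] : Fin 7 → ℤ) 6 = -1 := rfl
  simp [form, Jmat, Matrix.mulVec, dotProduct, Fin.sum_univ_seven, Matrix.diagonal, e5, e6]
  ring

def L27 : List Lam :=
  [Ev 0, Ev 1, Ev 2, Ev 3, Ev 4, Ev 5,
   Qv 0, Qv 1, Qv 2, Qv 3, Qv 4, Qv 5,
   Lij 0 1, Lij 0 2, Lij 0 3, Lij 0 4, Lij 0 5,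
   Lij 1 2, Lij 1 3, Lij 1 4, Lij 1 5,
   Lij 2 3, Lij 2 4, Lij 2 5,
   Lij 3 4, Lij 3 5, Lij 4 5]

lemma eta7 (v : Lam) : v = ![v 0, v 1, v 2, v 3, v 4, v 5, v 6] := by
  funext i; fin_cases i <;> rfl

lemma nn1 (c : ℤ) : 0 ≤ c * (c + 1) := by
  rcases le_or_gt 0 c with h | h
  · exact mul_nonneg h (by omega)
  · have h1 : c + 1 ≤ 0 := by omega
    nlinarith

lemma nn2 (c : ℤ) : 0 ≤ c * (c - 1) := by
  rcases le_or_gt 0 (c-1) with h | h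
  · nlinarith
  · have h1 : c ≤ 0 := by omega
    nlinarith

lemma zer1 (c : ℤ) (h : c * (c + 1) = 0) : c = 0 ∨ c = -1 := by
  rcases mul_eq_zero.mp h with h | h
  · exact Or.inl h
  · exact Or.inr (by omega)

lemma zer2 (c : ℤ) (h : c * (c - 1) = 0) : c = 0 ∨ c = 1 := by
  rcases mul_eq_zero.mp h with h | h
  · exact Or.inl h
  · exact Or.inr (by omega)

set_option maxHeartbeats 2000000 in
lemma mem27 (v : Lam) (hv : IsClass v) : v ∈ L27 := by
  obtain ⟨h1, h2⟩ := hv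
  rw [form_eval] at h1 h2
  have k0 : Kv 0 = -3 := rfl
  have k1 : Kv 1 = 1 := rfl
  have k2 : Kv 2 = 1 := rfl
  have k3 : Kv 3 = 1 := rfl
  have k4 : Kv 4 = 1 := rfl
  have k5 : Kv 5 = 1 := rfl
  have k6 : Kv 6 = 1 := rfl
  rw [k0,k1,k2,k3,k4,k5,k6] at h2
  rw [eta7 v]
  set a0 := v 0 with ha0
  set a1 := v 1 with ha1
  set a2 := v 2 with ha2
  set a3 := v 3 with ha3
  set a4 := v 4 with ha4
  set a5 := v 5 with ha5
  set a6 := v 6 with ha6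
  clear_value a0 a1 a2 a3 a4 a5 a6
  clear ha0 ha1 ha2 ha3 ha4 ha5 ha6
  norm_num at h2
  -- h2 : a0 * -3 - a1 - ... = -1  (check form)
  have hb : 3 * a0 ^ 2 - 6 * a0 - 5 ≤ 0 := by
    nlinarith [sq_nonneg (a1-a2), sq_nonneg (a1-a3), sq_nonneg (a1-a4), sq_nonneg (a1-a5),
      sq_nonneg (a1-a6), sq_nonneg (a2-a3), sq_nonneg (a2-a4), sq_nonneg (a2-a5), sq_nonneg (a2-a6),
      sq_nonneg (a3-a4), sq_nonneg (a3-a5), sq_nonneg (a3-a6), sq_nonneg (a4-a5), sq_nonneg (a4-a6),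
      sq_nonneg (a5-a6)]
  have h0 : 0 ≤ a0 := by nlinarith
  have h3 : a0 ≤ 2 := by nlinarith
  interval_cases a0
  · -- a=0 : sum sq = 1, sum = 1, each ai*(ai-1) = 0
    have d1 := zer2 a1 (by nlinarith [nn2 a1, nn2 a2, nn2 a3, nn2 a4, nn2 a5, nn2 a6])
    have d2 := zer2 a2 (by nlinarith [nn2 a1, nn2 a2, nn2 a3, nn2 a4, nn2 a5, nn2 a6])
    have d3 := zer2 a3 (by nlinarith [nn2 a1, nn2 a2, nn2 a3, nn2 a4, nn2 a5, nn2 a6])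
    have d4 := zer2 a4 (by nlinarith [nn2 a1, nn2 a2, nn2 a3, nn2 a4, nn2 a5, nn2 a6])
    have d5 := zer2 a5 (by nlinarith [nn2 a1, nn2 a2, nn2 a3, nn2 a4, nn2 a5, nn2 a6])
    have d6 := zer2 a6 (by nlinarith [nn2 a1, nn2 a2, nn2 a3, nn2 a4, nn2 a5, nn2 a6])
    clear h1 hb
    rcases d1 with rfl | rfl <;> rcases d2 with rfl | rfl <;> rcases d3 with rfl | rfl <;>
      rcases d4 with rfl | rfl <;> rcases d5 with rfl | rfl <;> rcases d6 with rfl | rfl <;>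
      first | omega | decide
  · have d1 := zer1 a1 (by nlinarith [nn1 a1, nn1 a2, nn1 a3, nn1 a4, nn1 a5, nn1 a6])
    have d2 := zer1 a2 (by nlinarith [nn1 a1, nn1 a2, nn1 a3, nn1 a4, nn1 a5, nn1 a6])
    have d3 := zer1 a3 (by nlinarith [nn1 a1, nn1 a2, nn1 a3, nn1 a4, nn1 a5, nn1 a6])
    have d4 := zer1 a4 (by nlinarith [nn1 a1, nn1 a2, nn1 a3, nn1 a4, nn1 a5, nn1 a6])
    have d5 := zer1 a5 (by nlinarith [nn1 a1, nn1 a2, nn1 a3, nn1 a4, nn1 a5, nn1 a6])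
    have d6 := zer1 a6 (by nlinarith [nn1 a1, nn1 a2, nn1 a3, nn1 a4, nn1 a5, nn1 a6])
    clear h1 hb
    rcases d1 with rfl | rfl <;> rcases d2 with rfl | rfl <;> rcases d3 with rfl | rfl <;>
      rcases d4 with rfl | rfl <;> rcases d5 with rfl | rfl <;> rcases d6 with rfl | rfl <;>
      first | omega | decide
  · have d1 := zer1 a1 (by nlinarith [nn1 a1, nn1 a2, nn1 a3, nn1 a4, nn1 a5, nn1 a6])
    have d2 := zer1 a2 (by nlinarith [nn1 a1, nn1 a2, nn1 a3, nn1 a4, nn1 a5, nn1 a6])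
    have d3 := zer1 a3 (by nlinarith [nn1 a1, nn1 a2, nn1 a3, nn1 a4, nn1 a5, nn1 a6])
    have d4 := zer1 a4 (by nlinarith [nn1 a1, nn1 a2, nn1 a3, nn1 a4, nn1 a5, nn1 a6])
    have d5 := zer1 a5 (by nlinarith [nn1 a1, nn1 a2, nn1 a3, nn1 a4, nn1 a5, nn1 a6])
    have d6 := zer1 a6 (by nlinarith [nn1 a1, nn1 a2, nn1 a3, nn1 a4, nn1 a5, nn1 a6])
    clear h1 hb
    rcases d1 with rfl | rfl <;> rcases d2 with rfl | rfl <;> rcases d3 with rfl | rfl <;>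
      rcases d4 with rfl | rfl <;> rcases d5 with rfl | rfl <;> rcases d6 with rfl | rfl <;>
      first | omega | decide
lemma gO0a : (gU : Matrix (Fin 7) (Fin 7) ℤ) *ᵥ (Ev 0) = Ev 1 := by decide
lemma gO0b : (gU : Matrix (Fin 7) (Fin 7) ℤ) *ᵥ (Ev 1) = Ev 2 := by decide
lemma gO0c : (gU : Matrix (Fin 7) (Fin 7) ℤ) *ᵥ (Ev 2) = Ev 0 := by decide
lemma gO1a : (gU : Matrix (Fin 7) (Fin 7) ℤ) *ᵥ (Ev 3) = Ev 4 := by decide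
lemma gO1b : (gU : Matrix (Fin 7) (Fin 7) ℤ) *ᵥ (Ev 4) = Ev 5 := by decide
lemma gO1c : (gU : Matrix (Fin 7) (Fin 7) ℤ) *ᵥ (Ev 5) = Ev 3 := by decide
lemma gO2a : (gU : Matrix (Fin 7) (Fin 7) ℤ) *ᵥ (Qv 0) = Qv 1 := by decide
lemma gO2b : (gU : Matrix (Fin 7) (Fin 7) ℤ) *ᵥ (Qv 1) = Qv 2 := by decide
lemma gO2c : (gU : Matrix (Fin 7) (Fin 7) ℤ) *ᵥ (Qv 2) = Qv 0 := by decide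
lemma gO3a : (gU : Matrix (Fin 7) (Fin 7) ℤ) *ᵥ (Qv 3) = Qv 4 := by decide
lemma gO3b : (gU : Matrix (Fin 7) (Fin 7) ℤ) *ᵥ (Qv 4) = Qv 5 := by decide
lemma gO3c : (gU : Matrix (Fin 7) (Fin 7) ℤ) *ᵥ (Qv 5) = Qv 3 := by decide
lemma gO4a : (gU : Matrix (Fin 7) (Fin 7) ℤ) *ᵥ (Lij 0 1) = Lij 1 2 := by decide
lemma gO4b : (gU : Matrix (Fin 7) (Fin 7) ℤ) *ᵥ (Lij 1 2) = Lij 0 2 := by decide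
lemma gO4c : (gU : Matrix (Fin 7) (Fin 7) ℤ) *ᵥ (Lij 0 2) = Lij 0 1 := by decide
lemma gO5a : (gU : Matrix (Fin 7) (Fin 7) ℤ) *ᵥ (Lij 3 4) = Lij 4 5 := by decide
lemma gO5b : (gU : Matrix (Fin 7) (Fin 7) ℤ) *ᵥ (Lij 4 5) = Lij 3 5 := by decide
lemma gO5c : (gU : Matrix (Fin 7) (Fin 7) ℤ) *ᵥ (Lij 3 5) = Lij 3 4 := by decide
lemma gO6a : (gU : Matrix (Fin 7) (Fin 7) ℤ) *ᵥ (Lij 0 3) = Lij 1 4 := by decide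
lemma gO6b : (gU : Matrix (Fin 7) (Fin 7) ℤ) *ᵥ (Lij 1 4) = Lij 2 5 := by decide
lemma gO6c : (gU : Matrix (Fin 7) (Fin 7) ℤ) *ᵥ (Lij 2 5) = Lij 0 3 := by decide
lemma gO7a : (gU : Matrix (Fin 7) (Fin 7) ℤ) *ᵥ (Lij 0 4) = Lij 1 5 := by decide
lemma gO7b : (gU : Matrix (Fin 7) (Fin 7) ℤ) *ᵥ (Lij 1 5) = Lij 2 3 := by decide
lemma gO7c : (gU : Matrix (Fin 7) (Fin 7) ℤ) *ᵥ (Lij 2 3) = Lij 0 4 := by decide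
lemma gO8a : (gU : Matrix (Fin 7) (Fin 7) ℤ) *ᵥ (Lij 0 5) = Lij 1 3 := by decide
lemma gO8b : (gU : Matrix (Fin 7) (Fin 7) ℤ) *ᵥ (Lij 1 3) = Lij 2 4 := by decide
lemma gO8c : (gU : Matrix (Fin 7) (Fin 7) ℤ) *ᵥ (Lij 2 4) = Lij 0 5 := by decide

lemma mem27cases (v : Lam) (hv : IsClass v) :
    v = Ev 0 ∨
    v = Ev 1 ∨
    v = Ev 2 ∨
    v = Ev 3 ∨
    v = Ev 4 ∨
    v = Ev 5 ∨
    v = Qv 0 ∨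
    v = Qv 1 ∨
    v = Qv 2 ∨
    v = Qv 3 ∨
    v = Qv 4 ∨
    v = Qv 5 ∨
    v = Lij 0 1 ∨
    v = Lij 0 2 ∨
    v = Lij 0 3 ∨
    v = Lij 0 4 ∨
    v = Lij 0 5 ∨
    v = Lij 1 2 ∨
    v = Lij 1 3 ∨
    v = Lij 1 4 ∨
    v = Lij 1 5 ∨
    v = Lij 2 3 ∨
    v = Lij 2 4 ∨
    v = Lij 2 5 ∨
    v = Lij 3 4 ∨
    v = Lij 3 5 ∨
    v = Lij 4 5 := by
  have h := mem27 v hv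
  simpa [L27] using h
instance (v : Lam) : Decidable (IsClass v) := by unfold IsClass; infer_instance

lemma rot1 (a b c : Lam) : ({a, b, c} : Set Lam) = {b, c, a} := by
  ext x; simp only [Set.mem_insert_iff, Set.mem_singleton_iff]; tauto

lemma rot2 (a b c : Lam) : ({a, b, c} : Set Lam) = {c, a, b} := by
  ext x; simp only [Set.mem_insert_iff, Set.mem_singleton_iff]; tauto

def C9f : Finset Lam := {Ev 0, Ev 3, Qv 0, Qv 3, Lij 0 1, Lij 3 4, Lij 0 3, Lij 0 4, Lij 0 5}

set_option maxHeartbeats 1000000 in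
lemma orbit_count :
    {S : Set Lam | ∃ v : Lam, IsClass v ∧
      S = {v, (gU : Matrix (Fin 7) (Fin 7) ℤ) *ᵥ v,
        (gU : Matrix (Fin 7) (Fin 7) ℤ) *ᵥ ((gU : Matrix (Fin 7) (Fin 7) ℤ) *ᵥ v)}}.ncard
      = 9 := by
  have himg : {S : Set Lam | ∃ v : Lam, IsClass v ∧
      S = {v, (gU : Matrix (Fin 7) (Fin 7) ℤ) *ᵥ v,
        (gU : Matrix (Fin 7) (Fin 7) ℤ) *ᵥ ((gU : Matrix (Fin 7) (Fin 7) ℤ) *ᵥ v)}}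
      = (fun r : Lam => ({r, (gU : Matrix (Fin 7) (Fin 7) ℤ) *ᵥ r,
        (gU : Matrix (Fin 7) (Fin 7) ℤ) *ᵥ ((gU : Matrix (Fin 7) (Fin 7) ℤ) *ᵥ r)} : Set Lam)) '' ↑C9f := by
    ext S
    simp only [Set.mem_setOf_eq, Set.mem_image, Finset.mem_coe]
    constructor
    · rintro ⟨v, hv, rfl⟩
      rcases mem27cases v hv with rfl|rfl|rfl|rfl|rfl|rfl|rfl|rfl|rfl|rfl|rfl|rfl|rfl|rfl|rfl|rfl|rfl|rfl|rfl|rfl|rfl|rfl|rfl|rfl|rfl|rfl|rfl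
      · exact ⟨Ev 0, by decide, by simp only [gO0a, gO0b, gO0c]⟩
      · exact ⟨Ev 0, by decide, by simp only [gO0a, gO0b, gO0c]; exact rot1 _ _ _⟩
      · exact ⟨Ev 0, by decide, by simp only [gO0a, gO0b, gO0c]; exact rot2 _ _ _⟩
      · exact ⟨Ev 3, by decide, by simp only [gO1a, gO1b, gO1c]⟩
      · exact ⟨Ev 3, by decide, by simp only [gO1a, gO1b, gO1c]; exact rot1 _ _ _⟩
      · exact ⟨Ev 3, by decide, by simp only [gO1a, gO1b, gO1c]; exact rot2 _ _ _⟩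
      · exact ⟨Qv 0, by decide, by simp only [gO2a, gO2b, gO2c]⟩
      · exact ⟨Qv 0, by decide, by simp only [gO2a, gO2b, gO2c]; exact rot1 _ _ _⟩
      · exact ⟨Qv 0, by decide, by simp only [gO2a, gO2b, gO2c]; exact rot2 _ _ _⟩
      · exact ⟨Qv 3, by decide, by simp only [gO3a, gO3b, gO3c]⟩
      · exact ⟨Qv 3, by decide, by simp only [gO3a, gO3b, gO3c]; exact rot1 _ _ _⟩
      · exact ⟨Qv 3, by decide, by simp only [gO3a, gO3b, gO3c]; exact rot2 _ _ _⟩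
      · exact ⟨Lij 0 1, by decide, by simp only [gO4a, gO4b, gO4c]⟩
      · exact ⟨Lij 0 1, by decide, by simp only [gO4a, gO4b, gO4c]; exact rot2 _ _ _⟩
      · exact ⟨Lij 0 3, by decide, by simp only [gO6a, gO6b, gO6c]⟩
      · exact ⟨Lij 0 4, by decide, by simp only [gO7a, gO7b, gO7c]⟩
      · exact ⟨Lij 0 5, by decide, by simp only [gO8a, gO8b, gO8c]⟩
      · exact ⟨Lij 0 1, by decide, by simp only [gO4a, gO4b, gO4c]; exact rot1 _ _ _⟩
      · exact ⟨Lij 0 5, by decide, by simp only [gO8a, gO8b, gO8c]; exact rot1 _ _ _⟩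
      · exact ⟨Lij 0 3, by decide, by simp only [gO6a, gO6b, gO6c]; exact rot1 _ _ _⟩
      · exact ⟨Lij 0 4, by decide, by simp only [gO7a, gO7b, gO7c]; exact rot1 _ _ _⟩
      · exact ⟨Lij 0 4, by decide, by simp only [gO7a, gO7b, gO7c]; exact rot2 _ _ _⟩
      · exact ⟨Lij 0 5, by decide, by simp only [gO8a, gO8b, gO8c]; exact rot2 _ _ _⟩
      · exact ⟨Lij 0 3, by decide, by simp only [gO6a, gO6b, gO6c]; exact rot2 _ _ _⟩
      · exact ⟨Lij 3 4, by decide, by simp only [gO5a, gO5b, gO5c]⟩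
      · exact ⟨Lij 3 4, by decide, by simp only [gO5a, gO5b, gO5c]; exact rot2 _ _ _⟩
      · exact ⟨Lij 3 4, by decide, by simp only [gO5a, gO5b, gO5c]; exact rot1 _ _ _⟩
    · rintro ⟨r, hr, rfl⟩
      refine ⟨r, ?_, rfl⟩
      fin_cases hr <;> decide
  have hinj : Set.InjOn (fun r : Lam => ({r, (gU : Matrix (Fin 7) (Fin 7) ℤ) *ᵥ r,
        (gU : Matrix (Fin 7) (Fin 7) ℤ) *ᵥ ((gU : Matrix (Fin 7) (Fin 7) ℤ) *ᵥ r)} : Set Lam)) ↑C9f := by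
    intro x hx y hy h
    simp only [C9f, Finset.mem_coe, Finset.coe_insert, Set.mem_insert_iff, Finset.coe_singleton,
      Set.mem_singleton_iff, Finset.mem_insert, Finset.mem_singleton] at hx hy
    rcases hx with rfl|rfl|rfl|rfl|rfl|rfl|rfl|rfl|rfl <;> rcases hy with rfl|rfl|rfl|rfl|rfl|rfl|rfl|rfl|rfl <;>
      first
        | rfl
        | (exfalso
           rw [Set.ext_iff] at h
           have h2 := (h _).mp (Set.mem_insert _ _)
           simp only [Set.mem_insert_iff, Set.mem_singleton_iff] at h2
           revert h2
           decide)
  rw [himg, Set.ncard_image_of_injOn hinj, Set.ncard_coe_finset]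
  decide

/-- **(cf. Lemma 4.1.)** `g = w₍₁₂₃₎₍₄₅₆₎` permutes the 27 `(-1)`-classes with exactly nine
orbits, each of size 3; the three orbits `{L₁₄, L₂₅, L₃₆}`, `{L₁₅, L₂₆, L₃₄}`,
`{L₁₆, L₂₄, L₃₅}` consist of classes meeting pairwise with product 1, and the classes within
any other orbit are pairwise orthogonal. In particular `g` fixes no `(-1)`-class.
(Recall the `Fin 6` indexing: `Ev i = E_{i+1}`, so e.g. `L₁₄ = Lij 0 3`.) -/
theorem g_orbits_on_classes :
    (∀ v : Lam, IsClass v → IsClass ((gU : Matrix (Fin 7) (Fin 7) ℤ) *ᵥ v)) ∧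
    (∀ v : Lam, IsClass v → (gU : Matrix (Fin 7) (Fin 7) ℤ) *ᵥ v ≠ v) ∧
    (∀ v : Lam, IsClass v →
      (gU : Matrix (Fin 7) (Fin 7) ℤ) *ᵥ ((gU : Matrix (Fin 7) (Fin 7) ℤ) *ᵥ
        ((gU : Matrix (Fin 7) (Fin 7) ℤ) *ᵥ v)) = v) ∧
    {S : Set Lam | ∃ v : Lam, IsClass v ∧
      S = {v, (gU : Matrix (Fin 7) (Fin 7) ℤ) *ᵥ v,
        (gU : Matrix (Fin 7) (Fin 7) ℤ) *ᵥ ((gU : Matrix (Fin 7) (Fin 7) ℤ) *ᵥ v)}}.ncard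
      = 9 ∧
    ((gU : Matrix (Fin 7) (Fin 7) ℤ) *ᵥ Lij 0 3 = Lij 1 4 ∧
      (gU : Matrix (Fin 7) (Fin 7) ℤ) *ᵥ Lij 1 4 = Lij 2 5 ∧
      (gU : Matrix (Fin 7) (Fin 7) ℤ) *ᵥ Lij 2 5 = Lij 0 3 ∧
      form (Lij 0 3) (Lij 1 4) = 1 ∧ form (Lij 1 4) (Lij 2 5) = 1 ∧
      form (Lij 0 3) (Lij 2 5) = 1) ∧
    ((gU : Matrix (Fin 7) (Fin 7) ℤ) *ᵥ Lij 0 4 = Lij 1 5 ∧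
      (gU : Matrix (Fin 7) (Fin 7) ℤ) *ᵥ Lij 1 5 = Lij 2 3 ∧
      (gU : Matrix (Fin 7) (Fin 7) ℤ) *ᵥ Lij 2 3 = Lij 0 4 ∧
      form (Lij 0 4) (Lij 1 5) = 1 ∧ form (Lij 1 5) (Lij 2 3) = 1 ∧
      form (Lij 0 4) (Lij 2 3) = 1) ∧
    ((gU : Matrix (Fin 7) (Fin 7) ℤ) *ᵥ Lij 0 5 = Lij 1 3 ∧
      (gU : Matrix (Fin 7) (Fin 7) ℤ) *ᵥ Lij 1 3 = Lij 2 4 ∧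
      (gU : Matrix (Fin 7) (Fin 7) ℤ) *ᵥ Lij 2 4 = Lij 0 5 ∧
      form (Lij 0 5) (Lij 1 3) = 1 ∧ form (Lij 1 3) (Lij 2 4) = 1 ∧
      form (Lij 0 5) (Lij 2 4) = 1) ∧
    (∀ v : Lam, IsClass v →
      v ∉ ({Lij 0 3, Lij 1 4, Lij 2 5, Lij 0 4, Lij 1 5, Lij 2 3,
        Lij 0 5, Lij 1 3, Lij 2 4} : Set Lam) →
      form v ((gU : Matrix (Fin 7) (Fin 7) ℤ) *ᵥ v) = 0 ∧
      form v ((gU : Matrix (Fin 7) (Fin 7) ℤ) *ᵥ ((gU : Matrix (Fin 7) (Fin 7) ℤ) *ᵥ v)) = 0) := by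
  refine ⟨?_, ?_, ?_, orbit_count, by decide, by decide, by decide, ?_⟩
  · intro v hv
    rcases mem27cases v hv with rfl|rfl|rfl|rfl|rfl|rfl|rfl|rfl|rfl|rfl|rfl|rfl|rfl|rfl|rfl|rfl|rfl|rfl|rfl|rfl|rfl|rfl|rfl|rfl|rfl|rfl|rfl <;> decide
  · intro v hv
    rcases mem27cases v hv with rfl|rfl|rfl|rfl|rfl|rfl|rfl|rfl|rfl|rfl|rfl|rfl|rfl|rfl|rfl|rfl|rfl|rfl|rfl|rfl|rfl|rfl|rfl|rfl|rfl|rfl|rfl <;> decide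
  · intro v _
    rw [Matrix.mulVec_mulVec, Matrix.mulVec_mulVec,
      show (gU : Matrix (Fin 7) (Fin 7) ℤ) * (gU : Matrix (Fin 7) (Fin 7) ℤ) * (gU : Matrix (Fin 7) (Fin 7) ℤ) = 1 from by decide, Matrix.one_mulVec]
  · intro v hv hm
    rcases mem27cases v hv with rfl|rfl|rfl|rfl|rfl|rfl|rfl|rfl|rfl|rfl|rfl|rfl|rfl|rfl|rfl|rfl|rfl|rfl|rfl|rfl|rfl|rfl|rfl|rfl|rfl|rfl|rfl <;>
      first
        | exact ⟨by decide, by decide⟩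
        | exact absurd (by simp) hm
end

section
/- The sublattice {v ∈ Λ : (abcs)(v) = v} of vectors fixed by the single element abcs has rank 1 and is spanned by K; likewise, the sublattice of vectors fixed by both a²b and cs has rank 1 and is spanned by K. -/
open Matrix

@[simp] lemma cval_2_1 {α : Type*} (x : α) (f : Fin 1 → α) : Matrix.vecCons x f (1 : Fin 2) = f 0 := rfl
@[simp] lemma cval_3_1 {α : Type*} (x : α) (f : Fin 2 → α) : Matrix.vecCons x f (1 : Fin 3) = f 0 := rfl
@[simp] lemma cval_3_2 {α : Type*} (x : α) (f : Fin 2 → α) : Matrix.vecCons x f (2 : Fin 3) = f 1 := rfl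
@[simp] lemma cval_4_1 {α : Type*} (x : α) (f : Fin 3 → α) : Matrix.vecCons x f (1 : Fin 4) = f 0 := rfl
@[simp] lemma cval_4_2 {α : Type*} (x : α) (f : Fin 3 → α) : Matrix.vecCons x f (2 : Fin 4) = f 1 := rfl
@[simp] lemma cval_4_3 {α : Type*} (x : α) (f : Fin 3 → α) : Matrix.vecCons x f (3 : Fin 4) = f 2 := rfl
@[simp] lemma cval_5_1 {α : Type*} (x : α) (f : Fin 4 → α) : Matrix.vecCons x f (1 : Fin 5) = f 0 := rfl
@[simp] lemma cval_5_2 {α : Type*} (x : α) (f : Fin 4 → α) : Matrix.vecCons x f (2 : Fin 5) = f 1 := rfl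
@[simp] lemma cval_5_3 {α : Type*} (x : α) (f : Fin 4 → α) : Matrix.vecCons x f (3 : Fin 5) = f 2 := rfl
@[simp] lemma cval_5_4 {α : Type*} (x : α) (f : Fin 4 → α) : Matrix.vecCons x f (4 : Fin 5) = f 3 := rfl
@[simp] lemma cval_6_1 {α : Type*} (x : α) (f : Fin 5 → α) : Matrix.vecCons x f (1 : Fin 6) = f 0 := rfl
@[simp] lemma cval_6_2 {α : Type*} (x : α) (f : Fin 5 → α) : Matrix.vecCons x f (2 : Fin 6) = f 1 := rfl
@[simp] lemma cval_6_3 {α : Type*} (x : α) (f : Fin 5 → α) : Matrix.vecCons x f (3 : Fin 6) = f 2 := rfl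
@[simp] lemma cval_6_4 {α : Type*} (x : α) (f : Fin 5 → α) : Matrix.vecCons x f (4 : Fin 6) = f 3 := rfl
@[simp] lemma cval_6_5 {α : Type*} (x : α) (f : Fin 5 → α) : Matrix.vecCons x f (5 : Fin 6) = f 4 := rfl
@[simp] lemma cval_7_1 {α : Type*} (x : α) (f : Fin 6 → α) : Matrix.vecCons x f (1 : Fin 7) = f 0 := rfl
@[simp] lemma cval_7_2 {α : Type*} (x : α) (f : Fin 6 → α) : Matrix.vecCons x f (2 : Fin 7) = f 1 := rfl
@[simp] lemma cval_7_3 {α : Type*} (x : α) (f : Fin 6 → α) : Matrix.vecCons x f (3 : Fin 7) = f 2 := rfl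
@[simp] lemma cval_7_4 {α : Type*} (x : α) (f : Fin 6 → α) : Matrix.vecCons x f (4 : Fin 7) = f 3 := rfl
@[simp] lemma cval_7_5 {α : Type*} (x : α) (f : Fin 6 → α) : Matrix.vecCons x f (5 : Fin 7) = f 4 := rfl
@[simp] lemma cval_7_6 {α : Type*} (x : α) (f : Fin 6 → α) : Matrix.vecCons x f (6 : Fin 7) = f 5 := rfl

lemma mem_fixedBy (A : GL7) (v : Lam) :
    v ∈ fixedBy A ↔ (A : Matrix (Fin 7) (Fin 7) ℤ) *ᵥ v = v := by
  rw [fixedBy, LinearMap.mem_ker, LinearMap.sub_apply, LinearMap.id_apply,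
    Matrix.mulVecLin_apply, sub_eq_zero]

def M1 : Matrix (Fin 7) (Fin 7) ℤ :=
  !![5, 2, 2, 2, 2, 2, 2;
   -2, -1, -1, -1, -1, -1, 0;
   -2, -1, -1, -1, 0, -1, -1;
   -2, -1, -1, -1, -1, 0, -1;
   -2, -1, -1, 0, -1, -1, -1;
   -2, 0, -1, -1, -1, -1, -1;
   -2, -1, 0, -1, -1, -1, -1]

def M2 : Matrix (Fin 7) (Fin 7) ℤ :=
  !![1, 0, 0, 0, 0, 0, 0;
   0, 0, 1, 0, 0, 0, 0;
   0, 0, 0, 1, 0, 0, 0;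
   0, 1, 0, 0, 0, 0, 0;
   0, 0, 0, 0, 0, 0, 1;
   0, 0, 0, 0, 1, 0, 0;
   0, 0, 0, 0, 0, 1, 0]

def M3 : Matrix (Fin 7) (Fin 7) ℤ :=
  !![5, 2, 2, 2, 2, 2, 2;
   -2, -1, -1, -1, 0, -1, -1;
   -2, -1, -1, -1, -1, 0, -1;
   -2, -1, -1, -1, -1, -1, 0;
   -2, 0, -1, -1, -1, -1, -1;
   -2, -1, 0, -1, -1, -1, -1;
   -2, -1, -1, 0, -1, -1, -1]

lemma hM1 : ((aU * bU * cU * sU : GL7) : Matrix (Fin 7) (Fin 7) ℤ) = M1 := by decide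
lemma hM2 : ((aU * aU * bU : GL7) : Matrix (Fin 7) (Fin 7) ℤ) = M2 := by decide
lemma hM3 : ((cU * sU : GL7) : Matrix (Fin 7) (Fin 7) ℤ) = M3 := by decide

lemma ker1 (v : Lam) (h : M1 *ᵥ v = v) : v = (v 1) • Kv := by
  have h0 := congrFun h 0
  have h1 := congrFun h 1
  have h2 := congrFun h 2
  have h3 := congrFun h 3
  have h4 := congrFun h 4
  have h5 := congrFun h 5
  have h6 := congrFun h 6
  simp [M1, Matrix.mulVec, dotProduct, Fin.sum_univ_seven] at h0 h1 h2 h3 h4 h5 h6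
  funext j
  fin_cases j <;> simp [Kv] <;> omega

lemma ker2 (v : Lam) (h2 : M2 *ᵥ v = v) (h3 : M3 *ᵥ v = v) : v = (v 1) • Kv := by
  have a0 := congrFun h2 1
  have a1 := congrFun h2 2
  have a2 := congrFun h2 4
  have a3 := congrFun h2 5
  have b0 := congrFun h3 0
  have b1 := congrFun h3 1
  have b2 := congrFun h3 2
  have b3 := congrFun h3 3
  have b4 := congrFun h3 4
  simp [M2, M3, Matrix.mulVec, dotProduct, Fin.sum_univ_seven] at a0 a1 a2 a3 b0 b1 b2 b3 b4
  funext j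
  fin_cases j <;> simp [Kv] <;> omega

lemma Kv_ne : Kv ≠ 0 := by
  intro h
  have := congrFun h 0
  simp [Kv] at this

lemma finrank_span_Kv : Module.finrank ℤ ↥(Submodule.span ℤ {Kv}) = 1 := by
  have e := (LinearEquiv.toSpanNonzeroSingleton ℤ Lam Kv Kv_ne).finrank_eq
  simpa using e.symm


/-- **Lemma 4.7 (Galmin1).** The sublattice of `Λ` fixed by `abcs` has rank 1 and is spanned
by `K`; likewise for the sublattice fixed by both `a²b` and `cs`. -/
theorem fixed_of_abcs_and_of_aab_cs :
    (fixedBy (aU * bU * cU * sU) = Submodule.span ℤ {Kv} ∧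
      Module.finrank ℤ ↥(fixedBy (aU * bU * cU * sU)) = 1) ∧
    (fixedBy (aU * aU * bU) ⊓ fixedBy (cU * sU) = Submodule.span ℤ {Kv} ∧
      Module.finrank ℤ ↥(fixedBy (aU * aU * bU) ⊓ fixedBy (cU * sU)) = 1) := by
  have e1 : fixedBy (aU * bU * cU * sU) = Submodule.span ℤ {Kv} := by
    apply le_antisymm
    · intro v hv
      have h : M1 *ᵥ v = v := by
        have := (mem_fixedBy _ v).mp hv
        rwa [hM1] at this
      rw [Submodule.mem_span_singleton]
      exact ⟨v 1, (ker1 v h).symm⟩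
    · rw [Submodule.span_le, Set.singleton_subset_iff]
      exact (mem_fixedBy _ _).mpr (by rw [hM1]; decide)
  have e2 : fixedBy (aU * aU * bU) ⊓ fixedBy (cU * sU) = Submodule.span ℤ {Kv} := by
    apply le_antisymm
    · intro v hv
      rw [Submodule.mem_inf] at hv
      have h2 : M2 *ᵥ v = v := by
        have := (mem_fixedBy _ v).mp hv.1
        rwa [hM2] at this
      have h3 : M3 *ᵥ v = v := by
        have := (mem_fixedBy _ v).mp hv.2
        rwa [hM3] at this
      rw [Submodule.mem_span_singleton]
      exact ⟨v 1, (ker2 v h2 h3).symm⟩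
    · rw [Submodule.span_le, Set.singleton_subset_iff]
      refine Set.mem_inter ?_ ?_
      · exact (mem_fixedBy _ _).mpr (by rw [hM2]; decide)
      · exact (mem_fixedBy _ _).mpr (by rw [hM3]; decide)
  refine ⟨⟨e1, ?_⟩, ⟨e2, ?_⟩⟩
  · rw [e1]; exact finrank_span_Kv
  · rw [e2]; exact finrank_span_Kv
end

section
/- Let k be a field of characteristic zero, let u, v, w, α, μ, λ ∈ k with λ ≠ 0, and let l, σ ∈ k be nonzero elements with l² = λ and σ² = α. Set A = ((μu + w)l − μv)/(2lσ) and B = ((μu + w)l + μv)/(2lσ). Then in the polynomial ring k[x, y, t] the identity w·x·(x² − λy²)·t³ + μ·(ux + vy)·(x² − λy²)·t³ + μ³·(x² − λy²)³ + α·t⁶ = (A·(x − ly)·(x² − λy²) + σ·t³)·(B·(x + ly)·(x² − λy²) + σ·t³) holds if and only if 4αμ³ − (u² − v²/λ)·μ² − 2uwμ − w² = 0. -/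
open MvPolynomial

/-- **(cf. Lemma 5.9 (Rcase).)** Let `k` be a field of characteristic zero,
`u, v, w, α, μ, λ ∈ k` with `λ ≠ 0`, and `l, σ ∈ k` nonzero with `l² = λ`, `σ² = α`. Set
`A = ((μu + w)l − μv)/(2lσ)` and `B = ((μu + w)l + μv)/(2lσ)`. Then, in `k[x, y, t]`
(with `x = X 0`, `y = X 1`, `t = X 2`),
`w·x·(x² − λy²)·t³ + μ·(ux + vy)·(x² − λy²)·t³ + μ³·(x² − λy²)³ + α·t⁶`
factors as
`(A·(x − ly)·(x² − λy²) + σ·t³) · (B·(x + ly)·(x² − λy²) + σ·t³)`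
if and only if `4αμ³ − (u² − v²/λ)μ² − 2uwμ − w² = 0`. -/
theorem factorization_iff_mu_root (k : Type*) [Field k] [CharZero k]
    (u v w α μ lam l σ : k) (hlam : lam ≠ 0) (hl : l ≠ 0) (hσ : σ ≠ 0)
    (hl2 : l ^ 2 = lam) (hσ2 : σ ^ 2 = α) (A B : k)
    (hA : A = ((μ * u + w) * l - μ * v) / (2 * l * σ))
    (hB : B = ((μ * u + w) * l + μ * v) / (2 * l * σ)) :
    (C w * (X 0 : MvPolynomial (Fin 3) k) * (X 0 ^ 2 - C lam * X 1 ^ 2) * X 2 ^ 3 +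
        C μ * (C u * X 0 + C v * X 1) * (X 0 ^ 2 - C lam * X 1 ^ 2) * X 2 ^ 3 +
        C μ ^ 3 * (X 0 ^ 2 - C lam * X 1 ^ 2) ^ 3 + C α * X 2 ^ 6 =
      (C A * (X 0 - C l * X 1) * (X 0 ^ 2 - C lam * X 1 ^ 2) + C σ * X 2 ^ 3) *
        (C B * (X 0 + C l * X 1) * (X 0 ^ 2 - C lam * X 1 ^ 2) + C σ * X 2 ^ 3)) ↔
    4 * α * μ ^ 3 - (u ^ 2 - v ^ 2 / lam) * μ ^ 2 - 2 * u * w * μ - w ^ 2 = 0 := by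
  subst hl2 hσ2
  simp only [map_pow]
  have h1 : σ * A + σ * B = μ * u + w := by
    subst hA hB; field_simp; ring
  have h2 : σ * l * B - σ * l * A = μ * v := by
    subst hA hB; field_simp; ring
  have c1 := congrArg (MvPolynomial.C : k → MvPolynomial (Fin 3) k) h1
  have c2 := congrArg (MvPolynomial.C : k → MvPolynomial (Fin 3) k) h2
  simp only [map_add, map_sub, map_mul] at c1 c2
  have hQ : (X 0 ^ 2 - C l ^ 2 * X 1 ^ 2 : MvPolynomial (Fin 3) k) ≠ 0 := by
    intro h
    have := congrArg (eval (fun i => if i = 0 then (1 : k) else 0)) h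
    simp at this
  constructor
  · intro h
    have hfact : (C (μ ^ 3 - A * B) : MvPolynomial (Fin 3) k) *
        (X 0 ^ 2 - C l ^ 2 * X 1 ^ 2) ^ 3 = 0 := by
      simp only [map_sub, map_mul, map_pow]
      linear_combination h + ((X 0 ^ 2 - C l ^ 2 * X 1 ^ 2) * X 2 ^ 3 * X 0) * c1
        + ((X 0 ^ 2 - C l ^ 2 * X 1 ^ 2) * X 2 ^ 3 * X 1) * c2
    have hz : μ ^ 3 - A * B = 0 := by
      rcases mul_eq_zero.1 hfact with h' | h'
      · exact (MvPolynomial.C_eq_zero).1 h'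
      · exact absurd (pow_eq_zero_iff (by norm_num)|>.1 h') hQ
    subst hA hB
    field_simp at hz ⊢
    linear_combination hz
  · intro h
    have hz : μ ^ 3 - A * B = 0 := by
      subst hA hB
      field_simp at h ⊢
      linear_combination h
    have cz := congrArg (MvPolynomial.C : k → MvPolynomial (Fin 3) k) hz
    simp only [map_sub, map_mul, map_pow, map_zero] at cz
    linear_combination -((X 0 ^ 2 - C l ^ 2 * X 1 ^ 2) * X 2 ^ 3 * X 0) * c1
      - ((X 0 ^ 2 - C l ^ 2 * X 1 ^ 2) * X 2 ^ 3 * X 1) * c2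
      + (X 0 ^ 2 - C l ^ 2 * X 1 ^ 2) ^ 3 * cz
end

section
/- Let k be a field of characteristic zero, let u, v, α, β ∈ k with β³ = α and α ≠ 0, let (λ, μ) ∈ k² with (λ, μ) ≠ (0, 0), and let P ∈ k[x, y] be a homogeneous polynomial of degree 3 such that 27·α·P(λ, μ) + (uλ + vμ)³ = 0. Then the cubic form F = P(x, y) + z·t·(ux + vy) + z³ + α·t³ ∈ k[x, y, z, t] lies in the ideal generated by the two linear forms μx − λy and uβx + vβy − 3β²z − 3αt; moreover the point (x, y, z, t) = (0, 0, −β, 1) annihilates both linear forms and satisfies F(0, 0, −β, 1) = 0. (Geometrically: each of the three lines cut out by these linear forms as (λ : μ) runs over the roots of 27αP(λ,μ) + (uλ+vμ)³ = 0 lies on the cubic surface F = 0 and passes through the Eckardt point (0 : 0 : −β : 1).) -/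
/-!
On the plane `μx = λy` write `(x, y) = s • (λ, μ)`, so that `P(x, y) = s³ P(λ, μ)` by
homogeneity. With `w = uλ + vμ`, `A = 3β²z`, `B = 3αt` and `C = -βws`, the root condition
and `β³ = α` turn `27β⁶ F` into `A³ + B³ + C³ - 3ABC`, a multiple of `A + B + C`, which is
minus the second linear form on that plane. Evaluating at the generic point of the quotient
by the two linear forms turns this vanishing into ideal membership.
-/

open MvPolynomial

theorem MvPolynomial.IsHomogeneous.aeval_mul_algebraMap {σ R S : Type*} [CommSemiring R]
    [CommSemiring S] [Algebra R S] {φ : MvPolynomial σ R} {n : ℕ} (hφ : φ.IsHomogeneous n)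
    (r : S) (x : σ → R) :
    MvPolynomial.aeval (fun i => r * algebraMap R S (x i)) φ =
      r ^ n * algebraMap R S (eval x φ) := by
  rw [aeval_def, eval₂_eq, eval_eq, map_sum, Finset.mul_sum]
  refine Finset.sum_congr rfl fun d hd => ?_
  simp only [mul_pow, Finset.prod_mul_distrib, Finset.prod_pow_eq_pow_sum,
    ← hφ.degree_eq_sum_deg_support hd, map_mul, map_prod, map_pow]
  ring

theorem isCoprime_of_pair_ne_zero {K : Type*} [Field K] {a b : K} (h : (a, b) ≠ (0, 0)) :
    IsCoprime a b := by
  by_cases ha : a = 0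
  · have hb : b ≠ 0 := fun hb => h (by rw [ha, hb])
    exact ⟨0, b⁻¹, by simp [hb]⟩
  · exact ⟨a⁻¹, 0, by simp [ha]⟩

theorem IsCoprime.exists_eq_mul_of_mul_sub_mul_eq_zero {R : Type*} [CommRing R] {l m x y : R}
    (hlm : IsCoprime l m) (h : m * x - l * y = 0) : ∃ s, x = l * s ∧ y = m * s := by
  obtain ⟨a, b, hab⟩ := hlm
  exact ⟨a * x + b * y, by linear_combination b * h - x * hab,
    by linear_combination -a * h - y * hab⟩

theorem cubic_eq_zero_of_tangent {R : Type*} [CommRing R] {α β p w s z t : R}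
    (h3 : IsUnit (3 : R)) (hβ : β ^ 3 = α) (hβu : IsUnit β) (hroot : 27 * α * p + w ^ 3 = 0)
    (htangent : β * w * s - 3 * β ^ 2 * z - 3 * α * t = 0) :
    s ^ 3 * p + z * t * (w * s) + z ^ 3 + α * t ^ 3 = 0 := by
  rw [← ((h3.pow 3).mul (hβu.pow 6)).mul_right_eq_zero]
  linear_combination
    (-(9*β^4*w*t*s + (3*β^2*z)^2 + (3*β^2*z)*(β*w*s - 3*α*t) + (β*w*s - 3*α*t)^2)) * htangent
      + (27*p*β^3*s^3 + 9*β^2*w^2*s^2*t - 27*α*β*w*s*t^2 + 27*α*t^3*(β^3+α)) * hβ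
      + (β^3*s^3) * hroot

noncomputable section

variable {k : Type*} [Field k]

def cubicForm (P : MvPolynomial (Fin 2) k) (u v α : k) : MvPolynomial (Fin 4) k :=
  rename (fun i : Fin 2 => (i.castLE (by norm_num) : Fin 4)) P +
    (X 2 : MvPolynomial (Fin 4) k) * X 3 * (C u * X 0 + C v * X 1) + X 2 ^ 3 + C α * X 3 ^ 3

def axisPlaneForm (lam mu : k) : MvPolynomial (Fin 4) k := C mu * X 0 - C lam * X 1

/-- Minus the tangent plane of the cubic at the Eckardt point `(0 : 0 : -β : 1)`. -/
def tangentPlaneForm (u v α β : k) : MvPolynomial (Fin 4) k :=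
  C (u * β) * X 0 + C (v * β) * X 1 - C (3 * β ^ 2) * X 2 - C (3 * α) * X 3

theorem aeval_cubicForm_eq_zero [CharZero k] {R : Type*} [CommRing R] [Algebra k R]
    {u v α β lam mu : k} (hβ : β ^ 3 = α) (hα : α ≠ 0) (hlm : (lam, mu) ≠ (0, 0))
    {P : MvPolynomial (Fin 2) k} (hP : P.IsHomogeneous 3)
    (hroot : 27 * α * (eval ![lam, mu] P) + (u * lam + v * mu) ^ 3 = 0) {x : Fin 4 → R}
    (haxis : aeval x (axisPlaneForm lam mu) = 0)
    (htangent : aeval x (tangentPlaneForm u v α β) = 0) :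
    aeval x (cubicForm P u v α) = 0 := by
  simp only [axisPlaneForm, map_sub, map_mul, aeval_C, aeval_X] at haxis
  obtain ⟨s, hx0, hx1⟩ := ((isCoprime_of_pair_ne_zero hlm).map (algebraMap k R))
    |>.exists_eq_mul_of_mul_sub_mul_eq_zero haxis
  have hPs : aeval x (rename (fun i : Fin 2 => (i.castLE (by norm_num) : Fin 4)) P) =
      s ^ 3 * algebraMap k R (eval ![lam, mu] P) := by
    rw [aeval_rename, ← hP.aeval_mul_algebraMap]
    congr 2
    funext i
    fin_cases i <;> simp [hx0, hx1, mul_comm]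
  have hβ0 : β ≠ 0 := by rintro rfl; exact hα (by rw [← hβ]; ring)
  have h3 : IsUnit (3 : R) := by
    simpa only [map_ofNat] using (isUnit_of_invertible (3 : k)).map (algebraMap k R)
  have hroot' := congrArg (algebraMap k R) hroot
  simp only [map_add, map_mul, map_pow, map_ofNat, map_zero] at hroot'
  simp only [tangentPlaneForm, map_sub, map_add, map_mul, map_ofNat, map_pow, aeval_C, aeval_X,
    hx0, hx1] at htangent
  simp only [cubicForm, map_add, map_mul, map_pow, aeval_C, aeval_X, hPs, hx0, hx1]
  have key := cubic_eq_zero_of_tangent (w := algebraMap k R u * algebraMap k R lam +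
      algebraMap k R v * algebraMap k R mu) (s := s) (z := x 2) (t := x 3) h3
    (by rw [← map_pow, hβ]) ((Ne.isUnit hβ0).map (algebraMap k R)) hroot'
    (by linear_combination htangent)
  linear_combination key

theorem cubicForm_mem_span [CharZero k] {u v α β lam mu : k} (hβ : β ^ 3 = α) (hα : α ≠ 0)
    (hlm : (lam, mu) ≠ (0, 0)) {P : MvPolynomial (Fin 2) k} (hP : P.IsHomogeneous 3)
    (hroot : 27 * α * (eval ![lam, mu] P) + (u * lam + v * mu) ^ 3 = 0) :
    cubicForm P u v α ∈ Ideal.span {axisPlaneForm lam mu, tangentPlaneForm u v α β} := by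
  set I := Ideal.span {axisPlaneForm lam mu, tangentPlaneForm u v α β}
  have hgeneric (p : MvPolynomial (Fin 4) k) :
      aeval (fun i => Ideal.Quotient.mkₐ k I (X i)) p = Ideal.Quotient.mk I p :=
    (DFunLike.congr_fun (aeval_unique (Ideal.Quotient.mkₐ k I)) p).symm
  rw [← Ideal.Quotient.eq_zero_iff_mem, ← hgeneric]
  refine aeval_cubicForm_eq_zero hβ hα hlm hP hroot ?_ ?_ <;>
    rw [hgeneric, Ideal.Quotient.eq_zero_iff_mem]
  exacts [Ideal.subset_span (.inl rfl), Ideal.subset_span (.inr rfl)]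

end

/-- **(cf. Lemma 5.3 (X3Eckardt).)** Let `k` be a field of characteristic zero,
`u, v, α, β ∈ k` with `β³ = α ≠ 0`, let `(λ, μ) ≠ (0, 0)` in `k²`, and let `P ∈ k[x, y]` be
homogeneous of degree 3 with `27·α·P(λ, μ) + (uλ + vμ)³ = 0`. Then the cubic form
`F = P(x, y) + zt(ux + vy) + z³ + αt³` lies in the ideal generated by the linear forms
`μx − λy` and `uβx + vβy − 3β²z − 3αt`; moreover the point `(0, 0, −β, 1)` annihilates both
linear forms and `F`. (Variables: `x = X 0`, `y = X 1`, `z = X 2`, `t = X 3`.) -/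
theorem lines_through_eckardt_point_lie_on_cubic (k : Type*) [Field k] [CharZero k]
    (u v α β lam mu : k) (hβ : β ^ 3 = α) (hα : α ≠ 0) (hlm : (lam, mu) ≠ (0, 0))
    (P : MvPolynomial (Fin 2) k) (hP : P.IsHomogeneous 3)
    (hroot : 27 * α * (eval ![lam, mu] P) + (u * lam + v * mu) ^ 3 = 0) :
    (rename (fun i : Fin 2 => (i.castLE (by norm_num) : Fin 4)) P +
        (X 2 : MvPolynomial (Fin 4) k) * X 3 * (C u * X 0 + C v * X 1) +
        X 2 ^ 3 + C α * X 3 ^ 3) ∈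
      Ideal.span ({C mu * X 0 - C lam * X 1,
        C (u * β) * X 0 + C (v * β) * X 1 - C (3 * β ^ 2) * X 2 - C (3 * α) * X 3} :
        Set (MvPolynomial (Fin 4) k)) ∧
    eval ![0, 0, -β, 1] ((C mu * X 0 - C lam * X 1 : MvPolynomial (Fin 4) k)) = 0 ∧
    eval ![0, 0, -β, 1] ((C (u * β) * X 0 + C (v * β) * X 1 - C (3 * β ^ 2) * X 2 -
        C (3 * α) * X 3 : MvPolynomial (Fin 4) k)) = 0 ∧
    eval ![0, 0, -β, 1] (rename (fun i : Fin 2 => (i.castLE (by norm_num) : Fin 4)) P +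
        (X 2 : MvPolynomial (Fin 4) k) * X 3 * (C u * X 0 + C v * X 1) +
        X 2 ^ 3 + C α * X 3 ^ 3) = 0 := by
  have haxis : eval ![0, 0, -β, 1] (axisPlaneForm lam mu) = 0 := by simp [axisPlaneForm]
  have htangent : eval ![0, 0, -β, 1] (tangentPlaneForm u v α β) = 0 := by
    simp only [tangentPlaneForm, map_sub, map_add, map_mul, eval_C, eval_X, Matrix.cons_val]
    linear_combination 3 * hβ
  exact ⟨cubicForm_mem_span hβ hα hlm hP hroot, haxis, htangent,
    aeval_cubicForm_eq_zero hβ hα hlm hP hroot haxis htangent⟩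
end
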